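/- Let d ≥ 1 and N ≥ 0 be integers and let H1 = (H_{1,1},...,H_{1,d}) and H2 = (H_{2,1},...,H_{2,d}) be vectors in (0,1)^d. Write H̄1 = max_{j} H_{1,j} and H̄2 = max_j H_{2,j}, and assume H̄1 < H̄2. If 2·H̄2·(N + d/2) < 1 + 2N + H̄2/H̄1, then the integral ∫₀¹∫₀¹ [∏_{j=1}^d (t^{2H_{1,j}} + s^{2H_{2,j}})^{-1/2}] · ((t² + s²)/(t^{2H̄1} + s^{2H̄2}))^N dt ds is finite. -/

import Mathlib

/-!
On `(0,1]²` we have `t^{2H̄₁} ≤ t^{2H_{1,j}}` and `s^{2H̄₂} ≤ s^{2H_{2,j}}`, so with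
`D = t^{2H̄₁} + s^{2H̄₂}` and `α = N + d/2` the integrand is at most
`2^{N-1} (t^{2N} + s^{2N}) D^{-α}`. Weighted AM–GM gives `D^{-α} ≤ t^{-2H̄₁αθ} s^{-2H̄₂α(1-θ)}`
for every `θ ∈ [0,1]`, which turns each of the two terms into a product `t^{-p} s^{-q}`.
The hypothesis on the Hurst indices is exactly what allows choosing `θ` (one for each term)
with `p, q < 1`, and `t^{-p} s^{-q}` is integrable on `(0,1]²`.
-/

open MeasureTheory Set

lemma exists_mem_Icc_mul_lt_and_mul_one_sub_lt {A B u v : ℝ} (hA : 0 ≤ A) (hB : 0 ≤ B)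
    (hu : 0 < u) (hv : 0 < v) (h : A * B < A * v + B * u) :
    ∃ θ ∈ Icc (0 : ℝ) 1, A * θ < u ∧ B * (1 - θ) < v := by
  have hS : 0 < A * v + B * u := (mul_nonneg hA hB).trans_lt h
  have hr : A * B / (A * v + B * u) < 1 := (div_lt_one hS).2 h
  refine ⟨B * u / (A * v + B * u),
    ⟨by positivity, (div_le_one hS).2 (le_add_of_nonneg_left (by positivity))⟩, ?_, ?_⟩
  · calc A * (B * u / (A * v + B * u)) = u * (A * B / (A * v + B * u)) := by ring
      _ < u := mul_lt_of_lt_one_right hu hr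
  · calc B * (1 - B * u / (A * v + B * u)) = v * (A * B / (A * v + B * u)) := by
          field_simp; ring
      _ < v := mul_lt_of_lt_one_right hv hr

lemma add_rpow_neg_le_rpow_mul_rpow {x y θ α : ℝ} (hx : 0 < x) (hy : 0 < y)
    (hθ : θ ∈ Icc (0 : ℝ) 1) (hα : 0 ≤ α) :
    (x + y) ^ (-α) ≤ x ^ (-(θ * α)) * y ^ (-((1 - θ) * α)) := by
  have hgm : x ^ θ * y ^ (1 - θ) ≤ x + y := by
    have h := Real.geom_mean_le_arith_mean2_weighted hθ.1 (sub_nonneg.2 hθ.2) hx.le hy.le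
      (add_sub_cancel θ 1)
    nlinarith [mul_nonneg hθ.1 hy.le, mul_nonneg (sub_nonneg.2 hθ.2) hx.le]
  calc (x + y) ^ (-α) ≤ (x ^ θ * y ^ (1 - θ)) ^ (-α) :=
        Real.rpow_le_rpow_of_nonpos (by positivity) hgm (neg_nonpos.2 hα)
    _ = x ^ (-(θ * α)) * y ^ (-((1 - θ) * α)) := by
        rw [Real.mul_rpow (by positivity) (by positivity), ← Real.rpow_mul hx.le,
          ← Real.rpow_mul hy.le]
        ring_nf

lemma prod_add_rpow_neg_half_le {ι : Type*} [Fintype ι] {t s a b : ℝ} {H1 H2 : ι → ℝ}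
    (ht : t ∈ Ioc (0 : ℝ) 1) (hs : s ∈ Ioc (0 : ℝ) 1) (ha : ∀ j, H1 j ≤ a) (hb : ∀ j, H2 j ≤ b) :
    ∏ j, (t ^ (2 * H1 j) + s ^ (2 * H2 j)) ^ (-(1 : ℝ) / 2)
      ≤ (t ^ (2 * a) + s ^ (2 * b)) ^ (-(Fintype.card ι : ℝ) / 2) := by
  have := ht.1
  have := hs.1
  have hD : 0 < t ^ (2 * a) + s ^ (2 * b) := by positivity
  calc ∏ j, (t ^ (2 * H1 j) + s ^ (2 * H2 j)) ^ (-(1 : ℝ) / 2)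
      ≤ ∏ _j : ι, (t ^ (2 * a) + s ^ (2 * b)) ^ (-(1 : ℝ) / 2) := by
        refine Finset.prod_le_prod (fun j _ => by positivity) fun j _ => ?_
        refine Real.rpow_le_rpow_of_nonpos hD (add_le_add ?_ ?_) (by norm_num)
        · exact Real.rpow_le_rpow_of_exponent_ge ht.1 ht.2 (by linarith [ha j])
        · exact Real.rpow_le_rpow_of_exponent_ge hs.1 hs.2 (by linarith [hb j])
    _ = (t ^ (2 * a) + s ^ (2 * b)) ^ (-(Fintype.card ι : ℝ) / 2) := by
        rw [Finset.prod_const, Finset.card_univ, ← Real.rpow_natCast, ← Real.rpow_mul hD.le]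
        ring_nf

lemma prod_add_rpow_neg_half_mul_div_pow_le {ι : Type*} [Fintype ι] {t s a b : ℝ}
    {H1 H2 : ι → ℝ} (ht : t ∈ Ioc (0 : ℝ) 1) (hs : s ∈ Ioc (0 : ℝ) 1) (ha : ∀ j, H1 j ≤ a)
    (hb : ∀ j, H2 j ≤ b) (N : ℕ) :
    (∏ j, (t ^ (2 * H1 j) + s ^ (2 * H2 j)) ^ (-(1 : ℝ) / 2)) *
        ((t ^ 2 + s ^ 2) / (t ^ (2 * a) + s ^ (2 * b))) ^ N
      ≤ 2 ^ (N - 1) * ((t ^ (2 * N) + s ^ (2 * N)) *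
        (t ^ (2 * a) + s ^ (2 * b)) ^ (-((N : ℝ) + Fintype.card ι / 2))) := by
  have := ht.1
  have := hs.1
  set D := t ^ (2 * a) + s ^ (2 * b)
  have hD : 0 < D := by positivity
  calc (∏ j, (t ^ (2 * H1 j) + s ^ (2 * H2 j)) ^ (-(1 : ℝ) / 2)) * ((t ^ 2 + s ^ 2) / D) ^ N
      ≤ D ^ (-(Fintype.card ι : ℝ) / 2) * ((t ^ 2 + s ^ 2) / D) ^ N := by
        gcongr
        exact prod_add_rpow_neg_half_le ht hs ha hb
    _ = (t ^ 2 + s ^ 2) ^ N * D ^ (-((N : ℝ) + Fintype.card ι / 2)) := by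
        rw [show -((N : ℝ) + Fintype.card ι / 2) = -(Fintype.card ι : ℝ) / 2 + -N by ring,
          Real.rpow_add hD, Real.rpow_neg hD.le, Real.rpow_natCast, div_pow, div_eq_mul_inv]
        ring
    _ ≤ 2 ^ (N - 1) * ((t ^ 2) ^ N + (s ^ 2) ^ N) * D ^ (-((N : ℝ) + Fintype.card ι / 2)) := by
        gcongr
        exact add_pow_le (by positivity) (by positivity) N
    _ = 2 ^ (N - 1) * ((t ^ (2 * N) + s ^ (2 * N)) *
        D ^ (-((N : ℝ) + Fintype.card ι / 2))) := by
        rw [← pow_mul, ← pow_mul]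
        ring

lemma pow_mul_pow_mul_add_rpow_neg_le {t s a b α θ p q : ℝ} (m n : ℕ)
    (ht : t ∈ Ioc (0 : ℝ) 1) (hs : s ∈ Ioc (0 : ℝ) 1) (hθ : θ ∈ Icc (0 : ℝ) 1) (hα : 0 ≤ α)
    (hp : 2 * a * α * θ - m ≤ p) (hq : 2 * b * α * (1 - θ) - n ≤ q) :
    t ^ m * s ^ n * (t ^ (2 * a) + s ^ (2 * b)) ^ (-α) ≤ t ^ (-p) * s ^ (-q) := by
  have := ht.1
  have := hs.1
  calc t ^ m * s ^ n * (t ^ (2 * a) + s ^ (2 * b)) ^ (-α)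
      ≤ t ^ m * s ^ n * ((t ^ (2 * a)) ^ (-(θ * α)) * (s ^ (2 * b)) ^ (-((1 - θ) * α))) := by
        gcongr
        exact add_rpow_neg_le_rpow_mul_rpow (by positivity) (by positivity) hθ hα
    _ = t ^ (-(2 * a * α * θ - m)) * s ^ (-(2 * b * α * (1 - θ) - n)) := by
        rw [show -(2 * a * α * θ - m) = (m : ℝ) + 2 * a * -(θ * α) by ring,
          show -(2 * b * α * (1 - θ) - n) = (n : ℝ) + 2 * b * -((1 - θ) * α) by ring,
          Real.rpow_add ht.1, Real.rpow_add hs.1, Real.rpow_natCast, Real.rpow_natCast,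
          ← Real.rpow_mul ht.1.le, ← Real.rpow_mul hs.1.le]
        ring
    _ ≤ t ^ (-p) * s ^ (-q) := by
        apply mul_le_mul _ _ (by positivity) (by positivity)
        · exact Real.rpow_le_rpow_of_exponent_ge ht.1 ht.2 (by linarith)
        · exact Real.rpow_le_rpow_of_exponent_ge hs.1 hs.2 (by linarith)

lemma exists_lt_one_pow_add_pow_mul_add_rpow_neg_le {a b α : ℝ} (M : ℕ) (ha : 0 < a)
    (hab : a ≤ b) (hα : 0 < α) (h : 2 * b * α < 1 + M + b / a) :
    ∃ p < (1 : ℝ), ∃ q < (1 : ℝ), ∀ t ∈ Ioc (0 : ℝ) 1, ∀ s ∈ Ioc (0 : ℝ) 1,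
      (t ^ M + s ^ M) * (t ^ (2 * a) + s ^ (2 * b)) ^ (-α) ≤ 2 * (t ^ (-p) * s ^ (-q)) := by
  set A := 2 * a * α
  set B := 2 * b * α
  have hA : 0 < A := by positivity
  have hAB : A ≤ B := by unfold A B; gcongr
  have hAB' : A * B < A * (1 + M) + B := by
    have hratio : A * (b / a) = B := by unfold A B; field_simp
    linarith [mul_lt_mul_of_pos_left h hA]
  obtain ⟨θ₁, hθ₁, hAθ₁, hBθ₁⟩ := exists_mem_Icc_mul_lt_and_mul_one_sub_lt (u := 1 + M)
    (v := 1) hA.le (hA.trans_le hAB).le (by positivity) one_pos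
    (by linarith [mul_le_mul_of_nonneg_left hAB M.cast_nonneg])
  obtain ⟨θ₂, hθ₂, hAθ₂, hBθ₂⟩ := exists_mem_Icc_mul_lt_and_mul_one_sub_lt (u := 1)
    (v := 1 + M) hA.le (hA.trans_le hAB).le one_pos (by positivity) (by linarith)
  set p := max (A * θ₁ - M) (A * θ₂)
  set q := max (B * (1 - θ₁)) (B * (1 - θ₂) - M)
  refine ⟨p, max_lt (by linarith) hAθ₂, q, max_lt hBθ₁ (by linarith), fun t ht s hs => ?_⟩
  have hθ₁_term := pow_mul_pow_mul_add_rpow_neg_le (p := p) (q := q) M 0 ht hs hθ₁ hα.le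
    (le_max_left _ _) (by rw [Nat.cast_zero, sub_zero]; exact le_max_left _ _)
  have hθ₂_term := pow_mul_pow_mul_add_rpow_neg_le (p := p) (q := q) 0 M ht hs hθ₂ hα.le
    (by rw [Nat.cast_zero, sub_zero]; exact le_max_right _ _) (le_max_right _ _)
  rw [pow_zero, mul_one] at hθ₁_term
  rw [pow_zero, one_mul] at hθ₂_term
  linarith

lemma setLIntegral_Ioc_rpow_neg_lt_top {r : ℝ} (hr : r < 1) :
    ∫⁻ x in Ioc (0 : ℝ) 1, ENNReal.ofReal (x ^ (-r)) < ⊤ :=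
  (intervalIntegral.intervalIntegrable_rpow' (by linarith)).1.lintegral_lt_top

lemma setLIntegral_setLIntegral_lt_top_of_le_rpow_mul_rpow {f : ℝ → ℝ → ℝ} {C p q : ℝ}
    (hp : p < 1) (hq : q < 1)
    (hf : ∀ t ∈ Ioc (0 : ℝ) 1, ∀ s ∈ Ioc (0 : ℝ) 1, f t s ≤ C * t ^ (-p) * s ^ (-q)) :
    ∫⁻ t in Ioc (0 : ℝ) 1, ∫⁻ s in Ioc (0 : ℝ) 1, ENNReal.ofReal (f t s) < ⊤ := by
  calc ∫⁻ t in Ioc (0 : ℝ) 1, ∫⁻ s in Ioc (0 : ℝ) 1, ENNReal.ofReal (f t s)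
      ≤ ∫⁻ t in Ioc (0 : ℝ) 1, ∫⁻ s in Ioc (0 : ℝ) 1,
          ENNReal.ofReal C * ENNReal.ofReal (t ^ (-p)) * ENNReal.ofReal (s ^ (-q)) := by
        refine setLIntegral_mono' measurableSet_Ioc fun t ht => ?_
        refine setLIntegral_mono' measurableSet_Ioc fun s hs => ?_
        rw [← ENNReal.ofReal_mul' (Real.rpow_nonneg ht.1.le _),
          ← ENNReal.ofReal_mul' (Real.rpow_nonneg hs.1.le _)]
        exact ENNReal.ofReal_le_ofReal (hf t ht s hs)
    _ = ENNReal.ofReal C * (∫⁻ t in Ioc (0 : ℝ) 1, ENNReal.ofReal (t ^ (-p)))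
          * ∫⁻ s in Ioc (0 : ℝ) 1, ENNReal.ofReal (s ^ (-q)) := by
        rw [lintegral_lintegral_mul (by fun_prop) (by fun_prop),
          lintegral_const_mul' _ _ ENNReal.ofReal_ne_top]
    _ < ⊤ := ENNReal.mul_lt_top (ENNReal.mul_lt_top ENNReal.ofReal_lt_top
        (setLIntegral_Ioc_rpow_neg_lt_top hp)) (setLIntegral_Ioc_rpow_neg_lt_top hq)

theorem integral_prod_finite (d : ℕ) (hd : 1 ≤ d) (N : ℕ)
    (H1 H2 : Fin d → ℝ)
    (h1 : ∀ j, H1 j ∈ Ioo (0:ℝ) 1)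
    (HB1 HB2 : ℝ)
    (hB1 : IsGreatest (Set.range H1) HB1) (hB2 : IsGreatest (Set.range H2) HB2)
    (hlt : HB1 < HB2)
    (hcond : 2 * HB2 * ((N : ℝ) + (d : ℝ) / 2) < 1 + 2 * (N : ℝ) + HB2 / HB1) :
    (∫⁻ t in Ioc (0:ℝ) 1, ∫⁻ s in Ioc (0:ℝ) 1,
        ENNReal.ofReal ((∏ j, (t ^ (2 * H1 j) + s ^ (2 * H2 j)) ^ (-(1:ℝ)/2)) *
          ((t ^ 2 + s ^ 2) / (t ^ (2 * HB1) + s ^ (2 * HB2))) ^ N)) < ⊤ := by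
  obtain ⟨j, hj⟩ := hB1.1
  have ha : 0 < HB1 := hj ▸ (h1 j).1
  set α : ℝ := N + d / 2
  have hα : 0 < α := by
    have : (1 : ℝ) ≤ d := by exact_mod_cast hd
    positivity
  obtain ⟨p, hp, q, hq, hpq⟩ :=
    exists_lt_one_pow_add_pow_mul_add_rpow_neg_le (2 * N) ha hlt.le hα (by push_cast; exact hcond)
  refine setLIntegral_setLIntegral_lt_top_of_le_rpow_mul_rpow (C := 2 ^ (N - 1) * 2) hp hq
    fun t ht s hs => ?_
  have hbound := prod_add_rpow_neg_half_mul_div_pow_le ht hs (fun j => hB1.2 ⟨j, rfl⟩)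
    (fun j => hB2.2 ⟨j, rfl⟩) N
  rw [Fintype.card_fin] at hbound
  calc _ ≤ 2 ^ (N - 1) * ((t ^ (2 * N) + s ^ (2 * N)) * (t ^ (2 * HB1) + s ^ (2 * HB2)) ^ (-α)) :=
        hbound
    _ ≤ 2 ^ (N - 1) * (2 * (t ^ (-p) * s ^ (-q))) :=
        mul_le_mul_of_nonneg_left (hpq t ht s hs) (by positivity)
    _ = 2 ^ (N - 1) * 2 * t ^ (-p) * s ^ (-q) := by ring
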